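/- Contiguity invariant (property 1 in the proof of Theorem 1). In every reachable configuration of the bucketing system, every collection spans a contiguous range of buckets: for every collection A one has buckets(A) = {Min(A), Min(A)+1, …, Max(A)}, i.e., buckets(A) is an interval of natural numbers. -/
import Mathlib


/-- An allegation: a distinct identifier, a metadata value, and a reveal threshold. -/
structure Allegation where
  id : ℕ
  md : ℕ
  thr : ℕ
deriving DecidableEq

/-- A collection: a finite set of allegations, a finite set of occupied buckets,
and a flag indicating whether the collection has been revealed. -/
structure Collection where
  allegs : Finset Allegation
  buckets : Finset ℕ
  revealed : Bool
deriving DecidableEq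

namespace Collection
/-- `Min(A)`: the least occupied bucket. -/
noncomputable def bmin (A : Collection) : ℕ := sInf (A.buckets : Set ℕ)
/-- `Max(A)`: the greatest occupied bucket. -/
noncomputable def bmax (A : Collection) : ℕ := sSup (A.buckets : Set ℕ)
end Collection

/-- A configuration is a finite set of collections. -/
abbrev Config := Finset Collection

/-- The transition rules R1–R5 of the bucketing algorithm. -/
inductive Step : Config → Config → Prop
  /-- R1 (file): a new allegation `a` (with a fresh identifier and threshold `≥ 2`)
  is added as a fresh unrevealed singleton collection with bucket set `{t_a - 1}`. -/
  | file (C : Config) (a : Allegation)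
      (hthr : 2 ≤ a.thr)
      (hfresh : ∀ B ∈ C, ∀ b ∈ B.allegs, b.id ≠ a.id) :
      Step C (insert ⟨{a}, {a.thr - 1}, false⟩ C)
  /-- R2 (copy): if `A` is unrevealed, `Min(A) ≥ 1` and every `a ∈ A` has
  `t_a < Min(A) + |A|`, then `Min(A) - 1` is added to `buckets(A)`. -/
  | copy (C : Config) (A : Collection) (hA : A ∈ C)
      (hrev : A.revealed = false)
      (hmin : 1 ≤ A.bmin)
      (hthr : ∀ a ∈ A.allegs, a.thr < A.bmin + A.allegs.card) :
      Step C (insert ⟨A.allegs, insert (A.bmin - 1) A.buckets, false⟩ (C.erase A))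
  /-- R3 (coalesce): two distinct unrevealed collections with overlapping bucket
  sets and pairwise matching allegations coalesce. -/
  | coalesce (C : Config) (A B : Collection)
      (hA : A ∈ C) (hB : B ∈ C) (hne : A ≠ B)
      (hArev : A.revealed = false) (hBrev : B.revealed = false)
      (hover : (A.buckets ∩ B.buckets).Nonempty)
      (hmatch : ∀ a ∈ A.allegs, ∀ b ∈ B.allegs, a.md = b.md) :
      Step C (insert ⟨A.allegs ∪ B.allegs, A.buckets ∪ B.buckets, false⟩
        ((C.erase A).erase B))
  /-- R4 (reveal): an unrevealed collection occupying bucket 0 is marked revealed;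
  its bucket set becomes `{0, 1, …, |A|}`. -/
  | reveal (C : Config) (A : Collection) (hA : A ∈ C)
      (hrev : A.revealed = false) (h0 : (0 : ℕ) ∈ A.buckets) :
      Step C (insert ⟨A.allegs, Finset.range (A.allegs.card + 1), true⟩ (C.erase A))
  /-- R5 (absorb): a revealed collection absorbs an unrevealed one with overlapping
  bucket set and matching allegations; the result is revealed with bucket set
  `{0, 1, …, |A ∪ B|}`. -/
  | absorb (C : Config) (A B : Collection)
      (hA : A ∈ C) (hB : B ∈ C)
      (hArev : A.revealed = true) (hBrev : B.revealed = false)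
      (hover : (A.buckets ∩ B.buckets).Nonempty)
      (hmatch : ∀ a ∈ A.allegs, ∀ b ∈ B.allegs, a.md = b.md) :
      Step C (insert ⟨A.allegs ∪ B.allegs,
        Finset.range ((A.allegs ∪ B.allegs).card + 1), true⟩
        ((C.erase A).erase B))

/-- A configuration is reachable if it is obtained from the empty configuration
by finitely many applications of R1–R5. -/
def Reachable (C : Config) : Prop := Relation.ReflTransGen Step ∅ C

/-- A configuration is saturated if none of the rules R2–R5 is applicable. -/
def Saturated (C : Config) : Prop :=
  (¬ ∃ A ∈ C, A.revealed = false ∧ 1 ≤ A.bmin ∧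
      ∀ a ∈ A.allegs, a.thr < A.bmin + A.allegs.card) ∧
  (¬ ∃ A ∈ C, ∃ B ∈ C, A ≠ B ∧ A.revealed = false ∧ B.revealed = false ∧
      (A.buckets ∩ B.buckets).Nonempty ∧
      ∀ a ∈ A.allegs, ∀ b ∈ B.allegs, a.md = b.md) ∧
  (¬ ∃ A ∈ C, A.revealed = false ∧ (0 : ℕ) ∈ A.buckets) ∧
  (¬ ∃ A ∈ C, ∃ B ∈ C, A.revealed = true ∧ B.revealed = false ∧
      (A.buckets ∩ B.buckets).Nonempty ∧
      ∀ a ∈ A.allegs, ∀ b ∈ B.allegs, a.md = b.md)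

/-- The set of all allegations filed so far (the union of all collections). -/
def filedAllegs (C : Config) : Finset Allegation := C.sup Collection.allegs

lemma sInf_coe_Icc (a b : ℕ) (h : a ≤ b) :
    sInf ((Finset.Icc a b : Finset ℕ) : Set ℕ) = a := by
  apply IsLeast.csInf_eq
  constructor
  · simp [h]
  · intro x hx
    simp only [Finset.coe_Icc, Set.mem_Icc] at hx
    exact hx.1

lemma sSup_coe_Icc (a b : ℕ) (h : a ≤ b) :
    sSup ((Finset.Icc a b : Finset ℕ) : Set ℕ) = b := by
  apply IsGreatest.csSup_eq
  constructor
  · simp [h]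
  · intro x hx
    simp only [Finset.coe_Icc, Set.mem_Icc] at hx
    exact hx.2

/-- If buckets are an explicit interval `Icc a b` with `a ≤ b`, then the
contiguity property holds. -/
lemma good_of_Icc (A : Collection) (a b : ℕ) (h : a ≤ b)
    (hb : A.buckets = Finset.Icc a b) :
    A.buckets = Finset.Icc A.bmin A.bmax := by
  have h1 : A.bmin = a := by rw [Collection.bmin, hb, sInf_coe_Icc a b h]
  have h2 : A.bmax = b := by rw [Collection.bmax, hb, sSup_coe_Icc a b h]
  rw [h1, h2, hb]

/-- A contiguous collection has `bmin ≤ bmax`. -/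
lemma bmin_le_bmax (A : Collection) (h : A.buckets = Finset.Icc A.bmin A.bmax) :
    A.bmin ≤ A.bmax := by
  by_contra hlt
  push_neg at hlt
  have hempty : A.buckets = ∅ := by
    rw [h, Finset.Icc_eq_empty]
    omega
  have h0 : A.bmin = 0 := by
    rw [Collection.bmin, hempty]
    simp
  have h1 : A.bmax = 0 := by
    rw [Collection.bmax, hempty]
    simp [csSup_empty]
  omega

lemma step_preserves (C D : Config) (hstep : Step C D)
    (hC : ∀ A ∈ C, A.buckets = Finset.Icc A.bmin A.bmax) :
    ∀ A ∈ D, A.buckets = Finset.Icc A.bmin A.bmax := by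
  intro X hX
  cases hstep with
  | file a hthr hfresh =>
    rcases Finset.mem_insert.1 hX with h | h
    · subst h
      exact good_of_Icc _ (a.thr - 1) (a.thr - 1) le_rfl (by simp)
    · exact hC X h
  | copy A hA hrev hmin hthr =>
    rcases Finset.mem_insert.1 hX with h | h
    · subst h
      have hIcc := hC A hA
      have hle := bmin_le_bmax A hIcc
      apply good_of_Icc _ (A.bmin - 1) A.bmax (by omega)
      show insert (A.bmin - 1) A.buckets = Finset.Icc (A.bmin - 1) A.bmax
      rw [hIcc]
      ext x
      simp only [Finset.mem_insert, Finset.mem_Icc]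
      omega
    · exact hC X (Finset.mem_of_mem_erase h)
  | coalesce A B hA hB hne hArev hBrev hover hmatch =>
    rcases Finset.mem_insert.1 hX with h | h
    · subst h
      have hIA := hC A hA
      have hIB := hC B hB
      have hlA := bmin_le_bmax A hIA
      have hlB := bmin_le_bmax B hIB
      obtain ⟨x, hx⟩ := hover
      rw [Finset.mem_inter, hIA, hIB, Finset.mem_Icc, Finset.mem_Icc] at hx
      apply good_of_Icc _ (min A.bmin B.bmin) (max A.bmax B.bmax) (by omega)
      show A.buckets ∪ B.buckets = _
      rw [hIA, hIB]
      ext y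
      simp only [Finset.mem_union, Finset.mem_Icc, le_min_iff, max_le_iff,
        min_le_iff, le_max_iff]
      omega
    · exact hC X (Finset.mem_of_mem_erase (Finset.mem_of_mem_erase h))
  | reveal A hA hrev h0 =>
    rcases Finset.mem_insert.1 hX with h | h
    · subst h
      apply good_of_Icc _ 0 A.allegs.card (Nat.zero_le _)
      show Finset.range (A.allegs.card + 1) = _
      ext y
      simp only [Finset.mem_range, Finset.mem_Icc]
      omega
    · exact hC X (Finset.mem_of_mem_erase h)
  | absorb A B hA hB hArev hBrev hover hmatch =>
    rcases Finset.mem_insert.1 hX with h | h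
    · subst h
      apply good_of_Icc _ 0 (A.allegs ∪ B.allegs).card (Nat.zero_le _)
      show Finset.range ((A.allegs ∪ B.allegs).card + 1) = _
      ext y
      simp only [Finset.mem_range, Finset.mem_Icc]
      omega
    · exact hC X (Finset.mem_of_mem_erase (Finset.mem_of_mem_erase h))

/-- **Contiguity invariant.** In every reachable configuration, every collection
spans a contiguous range of buckets: `buckets(A) = {Min(A), …, Max(A)}`. -/
theorem bucketing_contiguous (C : Config) (hreach : Reachable C) :
    ∀ A ∈ C, A.buckets = Finset.Icc A.bmin A.bmax := by
  induction hreach with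
  | refl => intro A hA; simp at hA
  | tail _ hstep ih => exact step_preserves _ _ hstep ih
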